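/- Let A be a μ×μ real symmetric matrix that is negative definite, has nonnegative off-diagonal entries (A_{ij} ≥ 0 for all i ≠ j), and is irreducible. Then A has an eigenvector a = (a_1, …, a_μ) all of whose entries are strictly positive (a_i > 0 for all i), and the corresponding eigenvalue α is strictly negative. -/

import Mathlib

/-!
A maximiser `v` of the quadratic form `v ⬝ᵥ A *ᵥ v` on a sphere is an eigenvector of the
symmetric matrix `A` (Lagrange multipliers). Since the off-diagonal entries are nonnegative,
`|v|` is again a maximiser, so `A` has a nonnegative eigenvector `a`, say `A *ᵥ a = α • a`.
If `a i = 0`, row `i` of this equation is a sum of nonnegative terms `A i j * a j` equal to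
`0`, so zeros of `a` spread along the edges of the graph of `A`; by connectedness `a` has no
zeros. Finally `α * (a ⬝ᵥ a) = a ⬝ᵥ A *ᵥ a < 0`.
-/

lemma SimpleGraph.Preconnected.of_adj_imp {V : Type*} {G : SimpleGraph V} (hG : G.Preconnected)
    {p : V → Prop} (hp : ∀ i j, G.Adj i j → p i → p j) {i : V} (hi : p i) (j : V) : p j := by
  obtain ⟨w⟩ := hG i j
  induction w with
  | nil => exact hi
  | cons hadj _ ih => exact ih (hp _ _ hadj hi)

lemma EuclideanSpace.norm_eq_norm_iff_dotProduct_self_eq {ι : Type*} [Fintype ι]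
    (v w : EuclideanSpace ℝ ι) : ‖w‖ = ‖v‖ ↔ w.ofLp ⬝ᵥ w.ofLp = v.ofLp ⬝ᵥ v.ofLp := by
  have h (x : EuclideanSpace ℝ ι) : ‖x‖ ^ 2 = x.ofLp ⬝ᵥ x.ofLp := by
    rw [← real_inner_self_eq_norm_sq, EuclideanSpace.inner_eq_star_dotProduct, star_trivial]
  rw [← h, ← h, sq_eq_sq₀ (norm_nonneg _) (norm_nonneg _)]

namespace Matrix

variable {ι : Type*} [Fintype ι]

lemma abs_dotProduct_abs (v : ι → ℝ) : |v| ⬝ᵥ |v| = v ⬝ᵥ v := by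
  simp only [dotProduct, Pi.abs_apply, abs_mul_abs_self]

lemma dotProduct_mulVec_le_abs {A : Matrix ι ι ℝ} (hoff : ∀ i j, i ≠ j → 0 ≤ A i j)
    (v : ι → ℝ) : v ⬝ᵥ A *ᵥ v ≤ |v| ⬝ᵥ A *ᵥ |v| := by
  simp only [dotProduct, mulVec, Finset.mul_sum, Pi.abs_apply]
  refine Finset.sum_le_sum fun i _ => Finset.sum_le_sum fun j _ => ?_
  calc v i * (A i j * v j) = A i j * (v i * v j) := by ring
    _ ≤ A i j * (|v i| * |v j|) := by
      rcases eq_or_ne i j with rfl | hij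
      · rw [abs_mul_abs_self]
      · exact mul_le_mul_of_nonneg_left (abs_mul (v i) (v j) ▸ le_abs_self _) (hoff i j hij)
    _ = |v i| * (A i j * |v j|) := by ring

lemma exists_isMaxOn_dotProduct_mulVec [Nonempty ι] (A : Matrix ι ι ℝ) :
    ∃ v : ι → ℝ, v ≠ 0 ∧ ∀ w, w ⬝ᵥ w = v ⬝ᵥ v → w ⬝ᵥ A *ᵥ w ≤ v ⬝ᵥ A *ᵥ v := by
  obtain ⟨x, hx, hmax⟩ := (isCompact_sphere (0 : EuclideanSpace ℝ ι) 1).exists_isMaxOn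
    (NormedSpace.sphere_nonempty.mpr zero_le_one)
    (f := fun x => x.ofLp ⬝ᵥ A *ᵥ x.ofLp) (by fun_prop)
  rw [mem_sphere_zero_iff_norm] at hx
  refine ⟨x.ofLp, fun h => by simp_all, fun w hw => hmax (mem_sphere_zero_iff_norm.mpr ?_)⟩
  rw [← hx]
  exact (EuclideanSpace.norm_eq_norm_iff_dotProduct_self_eq _ _).mpr hw

lemma IsSymm.exists_mulVec_eq_smul_of_isMaxOn [DecidableEq ι] {A : Matrix ι ι ℝ}
    (hA : A.IsSymm) {v : ι → ℝ} (hv : v ≠ 0)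
    (hmax : ∀ w, w ⬝ᵥ w = v ⬝ᵥ v → w ⬝ᵥ A *ᵥ w ≤ v ⬝ᵥ A *ᵥ v) :
    ∃ c : ℝ, A *ᵥ v = c • v := by
  set T := toEuclideanCLM (𝕜 := ℝ) (n := ι) A
  have hT : IsSelfAdjoint T := (isHermitian_iff_isSymm.mpr hA).isSelfAdjoint.map _
  have hquad (x : EuclideanSpace ℝ ι) : T.reApplyInnerSelf x = x.ofLp ⬝ᵥ A *ᵥ x.ofLp := by
    rw [T.reApplyInnerSelf_apply, RCLike.re_to_real, real_inner_comm, inner_toEuclideanCLM]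
  have hv' : WithLp.toLp 2 v ≠ 0 := by simpa using hv
  have heig := hT.hasEigenvector_of_isMaxOn hv' fun w hw => by
    rw [mem_sphere_zero_iff_norm] at hw
    show T.reApplyInnerSelf w ≤ T.reApplyInnerSelf _
    rw [hquad, hquad]
    exact hmax _ ((EuclideanSpace.norm_eq_norm_iff_dotProduct_self_eq _ _).mp hw)
  exact ⟨_, congrArg WithLp.ofLp heig.apply_eq_smul⟩

lemma IsSymm.exists_nonneg_eigenvector [DecidableEq ι] [Nonempty ι] {A : Matrix ι ι ℝ}
    (hA : A.IsSymm) (hoff : ∀ i j, i ≠ j → 0 ≤ A i j) :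
    ∃ a : ι → ℝ, a ≠ 0 ∧ 0 ≤ a ∧ ∃ c : ℝ, A *ᵥ a = c • a := by
  obtain ⟨v, hv, hmax⟩ := exists_isMaxOn_dotProduct_mulVec A
  have habs : |v| ≠ 0 := by simpa using hv
  refine ⟨|v|, habs, abs_nonneg v, hA.exists_mulVec_eq_smul_of_isMaxOn habs fun w hw => ?_⟩
  rw [abs_dotProduct_abs] at hw
  exact (hmax w hw).trans (dotProduct_mulVec_le_abs hoff v)

lemma apply_eq_zero_of_mulVec_eq_smul {A : Matrix ι ι ℝ} (hoff : ∀ i j, i ≠ j → 0 ≤ A i j)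
    {a : ι → ℝ} (ha : 0 ≤ a) {c : ℝ} (hac : A *ᵥ a = c • a) {i j : ι} (hAij : A i j ≠ 0)
    (hai : a i = 0) : a j = 0 := by
  have hterm_nonneg (k : ι) : 0 ≤ A i k * a k := by
    rcases eq_or_ne i k with rfl | hik
    · simp [hai]
    · exact mul_nonneg (hoff i k hik) (ha k)
  have hrow : ∑ k, A i k * a k = 0 := by
    simpa [hai, mulVec, dotProduct] using congrFun hac i
  have hterm := (Finset.sum_eq_zero_iff_of_nonneg fun k _ => hterm_nonneg k).mp hrow j
    (Finset.mem_univ j)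
  exact (mul_eq_zero.mp hterm).resolve_left hAij

lemma IsSymm.pos_of_mulVec_eq_smul {A : Matrix ι ι ℝ} (hA : A.IsSymm)
    (hoff : ∀ i j, i ≠ j → 0 ≤ A i j)
    (hirr : (SimpleGraph.fromRel fun i j => A i j ≠ 0).Connected)
    {a : ι → ℝ} (ha0 : a ≠ 0) (ha : 0 ≤ a) {c : ℝ} (hac : A *ᵥ a = c • a) (i : ι) : 0 < a i := by
  refine (ha i).lt_of_ne fun hai => ha0 (funext fun j => ?_)
  refine hirr.preconnected.of_adj_imp (p := fun k => a k = 0) (fun k l hkl hak => ?_) hai.symm j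
  rw [SimpleGraph.fromRel_adj, hA.apply k l, or_self] at hkl
  exact apply_eq_zero_of_mulVec_eq_smul hoff ha hac hkl.2 hak

lemma neg_of_mulVec_eq_smul_of_negDef {A : Matrix ι ι ℝ}
    (hneg : ∀ v : ι → ℝ, v ≠ 0 → v ⬝ᵥ A *ᵥ v < 0) {a : ι → ℝ} (ha : a ≠ 0) {c : ℝ}
    (hac : A *ᵥ a = c • a) : c < 0 := by
  have hquad : c * (a ⬝ᵥ a) < 0 := by simpa [hac] using hneg a ha
  exact neg_of_mul_neg_left hquad (Finset.sum_nonneg fun i _ => mul_self_nonneg (a i))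

end Matrix

theorem exists_positive_eigenvector_of_negDef_irreducible_general
    {μ : ℕ} (A : Matrix (Fin μ) (Fin μ) ℝ)
    (hsymm : A.IsSymm)
    (hneg : ∀ v : Fin μ → ℝ, v ≠ 0 → v ⬝ᵥ A.mulVec v < 0)
    (hoff : ∀ i j : Fin μ, i ≠ j → 0 ≤ A i j)
    (hirr : (SimpleGraph.fromRel (fun i j : Fin μ => A i j ≠ 0)).Connected) :
    ∃ (a : Fin μ → ℝ) (α : ℝ), (∀ i, 0 < a i) ∧ α < 0 ∧ A.mulVec a = α • a := by
  have := hirr.nonempty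
  obtain ⟨a, ha0, ha, α, haα⟩ := hsymm.exists_nonneg_eigenvector hoff
  exact ⟨a, α, hsymm.pos_of_mulVec_eq_smul hoff hirr ha0 ha haα,
    Matrix.neg_of_mulVec_eq_smul_of_negDef hneg ha0 haα, haα⟩

/-- A real symmetric negative definite matrix with nonnegative
off-diagonal entries which is irreducible (the graph with edges `A i j ≠ 0`
is connected) has a strictly positive eigenvector, with strictly negative
eigenvalue. -/
theorem exists_positive_eigenvector_of_negDef_irreducible
    {μ : ℕ} (hμ : 1 ≤ μ) (A : Matrix (Fin μ) (Fin μ) ℝ)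
    (hsymm : A.IsSymm)
    (hneg : ∀ v : Fin μ → ℝ, v ≠ 0 → v ⬝ᵥ A.mulVec v < 0)
    (hoff : ∀ i j : Fin μ, i ≠ j → 0 ≤ A i j)
    (hirr : (SimpleGraph.fromRel (fun i j : Fin μ => A i j ≠ 0)).Connected) :
    ∃ (a : Fin μ → ℝ) (α : ℝ), (∀ i, 0 < a i) ∧ α < 0 ∧ A.mulVec a = α • a :=
  exists_positive_eigenvector_of_negDef_irreducible_general A hsymm hneg hoff hirr
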